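/- Let 𝔤 = A₅,₁₇(0,0,r) with r ≠ 0, i.e. de¹ = e²⁵, de² = −e¹⁵, de³ = r·e⁴⁵, de⁴ = −r·e³⁵, de⁵ = 0. Then the SU(2)-structure adapted to the coframe f¹=e¹, f²=e², f³=e³, f⁴=e⁴, f⁵=e⁵ is hypo: d(e¹²+e³⁴) = 0, d((e¹³+e⁴²)∧e⁵) = 0, d((e¹⁴+e²³)∧e⁵) = 0. -/
import Mathlib


open ExteriorAlgebra

/-- Basis `e¹,…,e⁵` of `𝔤*` (0-indexed: `e i` is `e^{i+1}`) inside `Λ*𝔤*`. -/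
noncomputable def e (i : Fin 5) : ExteriorAlgebra ℝ (Fin 5 → ℝ) := ι ℝ (Pi.single i 1)

lemma e_sq (i : Fin 5) : e i * e i = 0 := by
  simpa [e] using ι_sq_zero (R := ℝ) (Pi.single i (1:ℝ))

lemma e_swap (i j : Fin 5) : e j * e i = -(e i * e j) := by
  have h := ι_add_mul_swap (R := ℝ) (M := Fin 5 → ℝ) (Pi.single i 1) (Pi.single j 1)
  simp only [e]
  rw [eq_neg_iff_add_eq_zero, add_comm]
  exact h

lemma e_cancel (i : Fin 5) (a : ExteriorAlgebra ℝ (Fin 5 → ℝ)) :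
    e i * (e i * a) = 0 := by
  rw [← mul_assoc, e_sq, zero_mul]

lemma e_mid (i j : Fin 5) : e i * (e j * e i) = 0 := by
  rw [e_swap i j, mul_neg, e_cancel, neg_zero]

/-- on `A₅,₁₇(0,0,r)` with `r ≠ 0`, `de¹ = e²⁵`, `de² = −e¹⁵`,
`de³ = r·e⁴⁵`, `de⁴ = −r·e³⁵`, `de⁵ = 0`, the SU(2)-structure adapted to the coframe
`fⁱ = eⁱ` is hypo: `d(e¹²+e³⁴) = 0`, `d((e¹³+e⁴²)∧e⁵) = 0`, `d((e¹⁴+e²³)∧e⁵) = 0`. -/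
theorem stmt17 (r : ℝ) (hr : r ≠ 0)
    (d : ExteriorAlgebra ℝ (Fin 5 → ℝ) →ₗ[ℝ] ExteriorAlgebra ℝ (Fin 5 → ℝ))
    (hone : d 1 = 0)
    (hleib : ∀ (v : Fin 5 → ℝ) (x : ExteriorAlgebra ℝ (Fin 5 → ℝ)),
      d (ι ℝ v * x) = d (ι ℝ v) * x - ι ℝ v * d x)
    (h1 : d (e 0) = e 1 * e 4) (h2 : d (e 1) = -(e 0 * e 4))
    (h3 : d (e 2) = r • (e 3 * e 4)) (h4 : d (e 3) = -(r • (e 2 * e 4)))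
    (h5 : d (e 4) = 0) :
    d (e 0 * e 1 + e 2 * e 3) = 0 ∧
    d ((e 0 * e 2 + e 3 * e 1) * e 4) = 0 ∧
    d ((e 0 * e 3 + e 1 * e 2) * e 4) = 0 := by
  have leib : ∀ (i : Fin 5) (x : ExteriorAlgebra ℝ (Fin 5 → ℝ)),
      d (e i * x) = d (e i) * x - e i * d x := fun i x => hleib (Pi.single i 1) x
  have d14 : d (e 1 * e 4) = 0 := by
    rw [leib, h2, h5, neg_mul, mul_assoc, e_sq]
    simp
  have d24 : d (e 2 * e 4) = 0 := by
    rw [leib, h3, h5, smul_mul_assoc, mul_assoc, e_sq]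
    simp
  have d34 : d (e 3 * e 4) = 0 := by
    rw [leib, h4, h5, neg_mul, smul_mul_assoc, mul_assoc, e_sq]
    simp
  refine ⟨?_, ?_, ?_⟩
  · rw [map_add, leib, leib, h1, h2, h3, h4]
    rw [mul_assoc, e_swap 1 4, mul_neg, e_cancel, mul_neg, e_cancel]
    rw [smul_mul_assoc, mul_assoc, e_swap 3 4, mul_neg, e_cancel,
      mul_neg, mul_smul_comm, e_cancel]
    simp
  · rw [add_mul, mul_assoc, mul_assoc, map_add, leib 0, leib 3, d14, d24, h1, h4]
    rw [mul_assoc, e_mid 4 2]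
    rw [neg_mul, smul_mul_assoc, mul_assoc, e_mid 4 1]
    simp
  · rw [add_mul, mul_assoc, mul_assoc, map_add, leib 0, leib 1, d34, d24, h1, h2]
    rw [mul_assoc, e_mid 4 3]
    rw [neg_mul, mul_assoc, e_mid 4 2]
    simp
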